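/- Let A and B be n×m matrices with natural number entries (Fin n → Fin m → ℕ) such that A and B have the same row sums (Σ_j A(i,j) = Σ_j B(i,j) for every i) and the same column sums (Σ_i A(i,j) = Σ_i B(i,j) for every j). Then there exists a finite sequence of matrices with natural number entries A = A_0, A_1, …, A_T = B, each having the same row sums and the same column sums as A, such that for each t, A_{t+1} is obtained from A_t by a ring swap of length r_t with 1 ≤ r_t ≤ n whose rows i_1, …, i_{r_t} are pairwise distinct. -/

import Mathlib

/-!
Rectangular swaps (rings of length 2) already suffice. If `A ≠ B` have equal margins, some
entry has `A a b > B a b`; the sum of row `a` gives a column `b'` with `A a b' < B a b'`, and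
the sum of column `b'` gives a row `a'` with `A a' b' > B a' b'`. The ring on rows `a, a'` and
columns `b', b` adds `1` at `(a, b')` and subtracts `1` only at `(a, b)` and `(a', b')`, where
`A` exceeds `B`. So the result stays nonnegative and its overlap `∑ min (A a b) (B a b)` with
`B` strictly grows; as the overlap is bounded by the total of `B`, iterating reaches `B`.
-/

/-- The cyclic successor on `Fin r`: `t ↦ t + 1 (mod r)`, so that the index
after `r` wraps around to `1` (i.e. `j_{r+1} := j_1`). -/
def ringNext {r : ℕ} (t : Fin r) : Fin r :=
  ⟨((t : ℕ) + 1) % r, Nat.mod_lt _ t.pos⟩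

/-- The matrix `∑ t, (E_{i t, j t} - E_{i t, j (t+1)})` of a ring swap,
where `E_{a,b}` is the matrix with a `1` at entry `(a, b)` and `0` elsewhere,
and `j (t+1)` is understood cyclically (`j_{r+1} := j_1`). -/
def ringSwapDelta {n m r : ℕ} (i : Fin r → Fin n) (j : Fin r → Fin m) :
    Fin n → Fin m → ℤ :=
  fun a b => ∑ t : Fin r,
    ((if i t = a ∧ j t = b then 1 else 0) -
     (if i t = a ∧ j (ringNext t) = b then 1 else 0))

open Finset

lemma exists_lt_of_sum_eq {α M : Type*} [Fintype α] [AddCommMonoid M] [LinearOrder M]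
    [IsOrderedCancelAddMonoid M] {f g : α → M} (h : ∑ x, f x = ∑ x, g x) {x : α}
    (hx : g x < f x) : ∃ y, f y < g y := by
  by_contra! hc
  exact (sum_lt_sum (fun y _ => hc y) ⟨x, mem_univ x, hx⟩).ne h.symm

theorem Relation.ReflTransGen.exists_seq {α : Type*} {r : α → α → Prop} {a b : α}
    (h : Relation.ReflTransGen r a b) :
    ∃ (T : ℕ) (f : ℕ → α), f 0 = a ∧ f T = b ∧ ∀ t < T, r (f t) (f (t + 1)) := by
  induction h with
  | refl => exact ⟨0, fun _ => a, rfl, rfl, fun _ h => absurd h (Nat.not_lt_zero _)⟩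
  | @tail c d _ hcd ih =>
    obtain ⟨T, f, h0, hT, hf⟩ := ih
    refine ⟨T + 1, fun t => if t = T + 1 then d else f t, by simpa using h0, by simp,
      fun t ht => ?_⟩
    rcases Nat.lt_succ_iff_lt_or_eq.1 ht with ht | rfl
    · have h1 : t ≠ T + 1 := by omega
      have h2 : t + 1 ≠ T + 1 := by omega
      simp only [if_neg h1, if_neg h2]
      exact hf t ht
    · simpa [hT] using hcd

lemma ringNext_bijective {r : ℕ} : Function.Bijective (ringNext (r := r)) :=
  Finite.injective_iff_bijective.mp fun s t h =>
    Fin.ext <| (Nat.ModEq.add_right_cancel' 1 (congrArg Fin.val h)).eq_of_lt_of_lt s.isLt t.isLt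

section RingSwapDelta

variable {n m r : ℕ} (i : Fin r → Fin n) (j : Fin r → Fin m)

lemma sum_ringSwapDelta_row (a : Fin n) : ∑ b, ringSwapDelta i j a b = 0 := by
  simp [ringSwapDelta, sum_comm (γ := Fin m), sum_sub_distrib, ite_and]

lemma sum_ringSwapDelta_col (b : Fin m) : ∑ a, ringSwapDelta i j a b = 0 := by
  simp only [ringSwapDelta, sum_comm (γ := Fin n), sum_sub_distrib, ite_and, sum_ite_eq, mem_univ,
    if_true]
  rw [ringNext_bijective.sum_comp (fun t => if j t = b then (1 : ℤ) else 0), sub_self]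

variable {i j}

lemma ringSwapDelta_apply_self (hi : Function.Injective i) (t : Fin r) (b : Fin m) :
    ringSwapDelta i j (i t) b =
      (if j t = b then 1 else 0) - (if j (ringNext t) = b then 1 else 0) := by
  rw [ringSwapDelta, sum_eq_single t (fun s _ hst => by simp [hi.ne hst])
    (fun h => absurd (mem_univ t) h)]
  simp

lemma ringSwapDelta_apply_of_forall_ne {a : Fin n} (ha : ∀ t, i t ≠ a) (b : Fin m) :
    ringSwapDelta i j a b = 0 := by
  simp [ringSwapDelta, ha]

lemma ringSwapDelta_nonneg_or_eq_neg_one (hi : Function.Injective i)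
    (hj : ∀ s, j s ≠ j (ringNext s)) (a : Fin n) (b : Fin m) :
    0 ≤ ringSwapDelta i j a b ∨
      (∃ t, i t = a ∧ j (ringNext t) = b) ∧ ringSwapDelta i j a b = -1 := by
  by_cases hout : ∃ t, i t = a ∧ j (ringNext t) = b
  · obtain ⟨t, rfl, rfl⟩ := hout
    exact Or.inr ⟨⟨t, rfl, rfl⟩, by simp [ringSwapDelta_apply_self hi, hj t]⟩
  left
  by_cases ha : ∃ t, i t = a
  · obtain ⟨t, rfl⟩ := ha
    rw [ringSwapDelta_apply_self hi, if_neg fun hb => hout ⟨t, rfl, hb⟩]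
    split_ifs <;> simp
  · push Not at ha
    rw [ringSwapDelta_apply_of_forall_ne ha]

end RingSwapDelta

def overlap {n m : ℕ} (A B : Fin n → Fin m → ℕ) : ℕ :=
  ∑ p : Fin n × Fin m, min (A p.1 p.2) (B p.1 p.2)

lemma overlap_le {n m : ℕ} (A B : Fin n → Fin m → ℕ) :
    overlap A B ≤ ∑ p : Fin n × Fin m, B p.1 p.2 :=
  sum_le_sum fun _ _ => min_le_right _ _

lemma exists_add_ringSwapDelta_overlap_lt {n m r : ℕ} {i : Fin r → Fin n} {j : Fin r → Fin m}
    (hi : Function.Injective i) (hj : ∀ s, j s ≠ j (ringNext s)) (A B : Fin n → Fin m → ℕ)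
    (hneg : ∀ t, B (i t) (j (ringNext t)) < A (i t) (j (ringNext t)))
    {t₀ : Fin r} (hpos : A (i t₀) (j t₀) < B (i t₀) (j t₀)) :
    ∃ A' : Fin n → Fin m → ℕ, (∀ a b, (A' a b : ℤ) = A a b + ringSwapDelta i j a b) ∧
      overlap A B < overlap A' B := by
  have entry : ∀ a b, 0 ≤ (A a b : ℤ) + ringSwapDelta i j a b ∧
      min (A a b : ℤ) (B a b) ≤ min ((A a b : ℤ) + ringSwapDelta i j a b) (B a b) := by
    intro a b
    rcases ringSwapDelta_nonneg_or_eq_neg_one hi hj a b with h | ⟨⟨t, rfl, rfl⟩, h⟩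
    · omega
    · have := hneg t; omega
  obtain ⟨A', hA'⟩ : ∃ A' : Fin n → Fin m → ℕ,
      ∀ a b, (A' a b : ℤ) = A a b + ringSwapDelta i j a b :=
    ⟨fun a b => _, fun a b => Int.toNat_of_nonneg (entry a b).1⟩
  refine ⟨A', hA', sum_lt_sum (fun p _ => ?_) ⟨(i t₀, j t₀), mem_univ _, ?_⟩⟩
  · zify
    rw [hA']
    exact (entry p.1 p.2).2
  · have hδ := ringSwapDelta_apply_self (j := j) hi t₀ (j t₀)
    rw [if_pos rfl, if_neg (hj t₀).symm] at hδ
    zify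
    rw [hA', hδ]
    omega

lemma exists_rectangle_of_ne {n m : ℕ} {A B : Fin n → Fin m → ℕ}
    (hrow : ∀ a, ∑ b, A a b = ∑ b, B a b) (hcol : ∀ b, ∑ a, A a b = ∑ a, B a b)
    (hne : A ≠ B) :
    ∃ a a' b b', B a b < A a b ∧ A a b' < B a b' ∧ B a' b' < A a' b' := by
  obtain ⟨a, hab⟩ : ∃ a b, B a b < A a b := by
    obtain ⟨a, b, hne⟩ : ∃ a b, A a b ≠ B a b := by simpa [funext_iff] using hne
    rcases hne.lt_or_gt with hlt | hgt
    · exact ⟨a, exists_lt_of_sum_eq (hrow a).symm hlt⟩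
    · exact ⟨a, b, hgt⟩
  obtain ⟨b, hab⟩ := hab
  obtain ⟨b', hab'⟩ := exists_lt_of_sum_eq (hrow a) hab
  obtain ⟨a', ha'b'⟩ := exists_lt_of_sum_eq (f := fun x => B x b') (hcol b').symm hab'
  exact ⟨a, a', b, b', hab, hab', ha'b'⟩

def IsRingSwap {n m : ℕ} (X Y : Fin n → Fin m → ℕ) : Prop :=
  ∃ (r : ℕ), 1 ≤ r ∧ r ≤ n ∧
    ∃ (i : Fin r → Fin n) (j : Fin r → Fin m),
      Function.Injective i ∧
      (∀ s, j s ≠ j (ringNext s)) ∧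
      (∀ a b, (Y a b : ℤ) = (X a b : ℤ) + ringSwapDelta i j a b)

namespace IsRingSwap

variable {n m : ℕ} {X Y : Fin n → Fin m → ℕ}

lemma sum_row_eq (h : IsRingSwap X Y) (a : Fin n) : ∑ b, Y a b = ∑ b, X a b := by
  obtain ⟨r, -, -, i, j, -, -, hY⟩ := h
  zify
  simp only [hY, sum_add_distrib, sum_ringSwapDelta_row, add_zero]

lemma sum_col_eq (h : IsRingSwap X Y) (b : Fin m) : ∑ a, Y a b = ∑ a, X a b := by
  obtain ⟨r, -, -, i, j, -, -, hY⟩ := h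
  zify
  simp only [hY, sum_add_distrib, sum_ringSwapDelta_col, add_zero]

end IsRingSwap

lemma exists_isRingSwap_overlap_lt {n m : ℕ} {A B : Fin n → Fin m → ℕ}
    (hrow : ∀ a, ∑ b, A a b = ∑ b, B a b) (hcol : ∀ b, ∑ a, A a b = ∑ a, B a b)
    (hne : A ≠ B) : ∃ A', IsRingSwap A A' ∧ overlap A B < overlap A' B := by
  obtain ⟨a, a', b, b', hab, hab', ha'b'⟩ := exists_rectangle_of_ne hrow hcol hne
  have hi : Function.Injective ![a, a'] := by
    have : a ≠ a' := by rintro rfl; omega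
    intro s t
    fin_cases s <;> fin_cases t <;> simp [this, this.symm]
  have hj : ∀ s, ![b', b] s ≠ ![b', b] (ringNext s) := by
    have : b' ≠ b := by rintro rfl; omega
    exact Fin.forall_fin_two.2 ⟨this, this.symm⟩
  obtain ⟨A', hA', hlt⟩ := exists_add_ringSwapDelta_overlap_lt hi hj A B
    (Fin.forall_fin_two.2 ⟨hab, ha'b'⟩) (t₀ := 0) hab'
  have h2n : 2 ≤ n := by simpa using Fintype.card_le_of_injective _ hi
  exact ⟨A', ⟨2, by norm_num, h2n, _, _, hi, hj, hA'⟩, hlt⟩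

theorem reflTransGen_isRingSwap {n m : ℕ} (A B : Fin n → Fin m → ℕ)
    (hrow : ∀ a, ∑ b, A a b = ∑ b, B a b) (hcol : ∀ b, ∑ a, A a b = ∑ a, B a b) :
    Relation.ReflTransGen IsRingSwap A B := by
  by_cases hAB : A = B
  · exact hAB ▸ .refl
  obtain ⟨A', hswap, hlt⟩ := exists_isRingSwap_overlap_lt hrow hcol hAB
  have := overlap_le A' B
  exact .head hswap <| reflTransGen_isRingSwap A' B
    (fun a => (hswap.sum_row_eq a).trans (hrow a)) (fun b => (hswap.sum_col_eq b).trans (hcol b))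
termination_by ∑ p : Fin n × Fin m, B p.1 p.2 - overlap A B

/-- **Ring swaps connect nonnegative integer matrices with equal margins.**
If `A B : Fin n → Fin m → ℕ` have the same row sums and the same column sums,
then there is a finite sequence of natural-number matrices
`A = F 0, F 1, …, F T = B`, each with the same row and column sums as `A`,
such that each `F (t+1)` is obtained from `F t` by a single ring swap of some
length `r` with `1 ≤ r ≤ n` whose rows are pairwise distinct (and whose
consecutive columns differ cyclically). -/
theorem ring_swaps_connect_equal_margin_matrices
    {n m : ℕ} (A B : Fin n → Fin m → ℕ)
    (hrow : ∀ a, ∑ b, A a b = ∑ b, B a b)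
    (hcol : ∀ b, ∑ a, A a b = ∑ a, B a b) :
    ∃ (T : ℕ) (F : ℕ → Fin n → Fin m → ℕ),
      F 0 = A ∧ F T = B ∧
      (∀ t ≤ T, (∀ a, ∑ b, F t a b = ∑ b, A a b) ∧
                (∀ b, ∑ a, F t a b = ∑ a, A a b)) ∧
      (∀ t < T, ∃ (r : ℕ), 1 ≤ r ∧ r ≤ n ∧
        ∃ (i : Fin r → Fin n) (j : Fin r → Fin m),
          Function.Injective i ∧
          (∀ s, j s ≠ j (ringNext s)) ∧
          (∀ a b, (F (t + 1) a b : ℤ)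
            = (F t a b : ℤ) + ringSwapDelta i j a b)) := by
  obtain ⟨T, F, hF0, hFT, hstep⟩ := (reflTransGen_isRingSwap A B hrow hcol).exists_seq
  refine ⟨T, F, hF0, hFT, fun t ht => ?_, hstep⟩
  induction t with
  | zero => exact hF0 ▸ ⟨fun _ => rfl, fun _ => rfl⟩
  | succ t ih =>
    obtain ⟨hr, hc⟩ := ih (by omega)
    have hswap := hstep t (by omega)
    exact ⟨fun a => (hswap.sum_row_eq a).trans (hr a),
      fun b => (hswap.sum_col_eq b).trans (hc b)⟩
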